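/- (Global Lipschitz constant of the Jacobian, linear layer fixed.) Let D > 0 and let V ∈ ℝ^{n×k} be a fixed matrix whose every column has Euclidean norm at most D·√n. For the map W ↦ g(V, W) with derivative J(W) (a linear map ℝ^{k×d} → ℝ^n), one has for all W, W̃ ∈ ℝ^{k×d}: ‖J(W) − J(W̃)‖ ≤ B·D·√(n/k)·‖W − W̃‖_F, where ‖·‖_F is the Frobenius norm. -/

import Mathlib

open MeasureTheory ProbabilityTheory Filter
open scoped Topology NNReal

noncomputable def sigmaMin {E F : Type*} [NormedAddCommGroup E] [InnerProductSpace ℝ E]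
    [CompleteSpace E] [NormedAddCommGroup F] [InnerProductSpace ℝ F] [CompleteSpace F]
    (A : E →L[ℝ] F) : ℝ :=
  ⨅ w : {w : F // ‖w‖ = 1}, ‖ContinuousLinearMap.adjoint A w.1‖

/-- The two-layer DIP network `g(V, W) = (1/√k) V φ(W u)`, with the parameters `(V, W)`
encoded as a single Euclidean (Frobenius) vector. -/
noncomputable def dipNet (n k d : ℕ) (φ : ℝ → ℝ) (u : EuclideanSpace ℝ (Fin d))
    (θ : EuclideanSpace ℝ ((Fin n × Fin k) ⊕ (Fin k × Fin d))) : EuclideanSpace ℝ (Fin n) :=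
  WithLp.toLp 2 fun i => (1 / Real.sqrt k) *
    ∑ j : Fin k, θ (Sum.inl (i, j)) * φ (∑ l : Fin d, θ (Sum.inr (j, l)) * u l)

/-- The two-layer DIP network with the linear layer `V` fixed. -/
noncomputable def dipNetW (n k d : ℕ) (φ : ℝ → ℝ) (u : EuclideanSpace ℝ (Fin d))
    (V : Matrix (Fin n) (Fin k) ℝ) (W : EuclideanSpace ℝ (Fin k × Fin d)) :
    EuclideanSpace ℝ (Fin n) :=
  WithLp.toLp 2 fun i => (1 / Real.sqrt k) *
    ∑ j : Fin k, V i j * φ (∑ l : Fin d, W (j, l) * u l)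

/-- Supremum norm on a Euclidean space. -/
noncomputable def supNorm {m : ℕ} (v : EuclideanSpace ℝ (Fin m)) : ℝ := ⨆ i, |v i|


/-! With `v_j` the columns of `V`, the Jacobian is `J(W) H = (1/√k) Σ_j φ'((W u)_j) (H u)_j v_j`.
Hence, with `X = W - W'`, `(J(W) - J(W')) H` is a combination of the `v_j` whose coefficients
are at most `B |(X u)_j| |(H u)_j|` in absolute value. It remains to bound every column by `D √n`
and to apply Cauchy–Schwarz: `Σ_j |(X u)_j| |(H u)_j| ≤ ‖X u‖ ‖H u‖ ≤ ‖X‖_F ‖H‖_F`. -/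

theorem EuclideanSpace.sum_abs_mul_abs_le {ι : Type*} [Fintype ι] (a b : EuclideanSpace ℝ ι) :
    ∑ i, |a i| * |b i| ≤ ‖a‖ * ‖b‖ := by
  simpa only [EuclideanSpace.norm_eq, Real.norm_eq_abs, sq_abs] using
    Real.sum_mul_le_sqrt_mul_sqrt Finset.univ (fun i => |a i|) (fun i => |b i|)

theorem norm_sum_smul_le_of_norm_le {ι E : Type*} [Fintype ι] [SeminormedAddCommGroup E]
    [NormedSpace ℝ E] (s : ι → ℝ) {c : ι → E} {C : ℝ} (hc : ∀ j, ‖c j‖ ≤ C) :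
    ‖∑ j, s j • c j‖ ≤ C * ∑ j, |s j| := by
  calc ‖∑ j, s j • c j‖ ≤ ∑ j, |s j| * ‖c j‖ := by
        simpa only [norm_smul, Real.norm_eq_abs] using norm_sum_le Finset.univ (fun j => s j • c j)
    _ ≤ ∑ j, |s j| * C := by gcongr with j; exact hc j
    _ = C * ∑ j, |s j| := by rw [← Finset.sum_mul, mul_comm]

section DipNet

variable {n k d : ℕ}

/-- The matrix-vector product `W ↦ W u`, for `W` stored as a Frobenius vector. -/
noncomputable def rowMulVec (u : EuclideanSpace ℝ (Fin d)) :
    EuclideanSpace ℝ (Fin k × Fin d) →L[ℝ] EuclideanSpace ℝ (Fin k) :=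
  LinearMap.toContinuousLinearMap
    { toFun := fun W => WithLp.toLp 2 fun j => ∑ l, W (j, l) * u l
      map_add' := fun W W' => by ext j; simp [add_mul, Finset.sum_add_distrib]
      map_smul' := fun c W => by ext j; simp [mul_assoc, Finset.mul_sum] }

theorem rowMulVec_apply (u : EuclideanSpace ℝ (Fin d)) (W : EuclideanSpace ℝ (Fin k × Fin d))
    (j : Fin k) : rowMulVec u W j = ∑ l, W (j, l) * u l :=
  rfl

theorem norm_rowMulVec_le (u : EuclideanSpace ℝ (Fin d)) (W : EuclideanSpace ℝ (Fin k × Fin d)) :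
    ‖rowMulVec u W‖ ≤ ‖W‖ * ‖u‖ := by
  rw [← sq_le_sq₀ (norm_nonneg _) (by positivity), mul_pow, EuclideanSpace.real_norm_sq_eq,
    EuclideanSpace.real_norm_sq_eq, EuclideanSpace.real_norm_sq_eq, Fintype.sum_prod_type,
    Finset.sum_mul]
  gcongr with j
  exact Finset.sum_mul_sq_le_sq_mul_sq Finset.univ (fun l => W (j, l)) u

def colVec (V : Matrix (Fin n) (Fin k) ℝ) (j : Fin k) : EuclideanSpace ℝ (Fin n) :=
  WithLp.toLp 2 fun i => V i j

theorem norm_colVec (V : Matrix (Fin n) (Fin k) ℝ) (j : Fin k) :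
    ‖colVec V j‖ = √(∑ i, V i j ^ 2) := by
  simp [EuclideanSpace.norm_eq, colVec]

theorem dipNetW_eq_sum (φ : ℝ → ℝ) (u : EuclideanSpace ℝ (Fin d)) (V : Matrix (Fin n) (Fin k) ℝ)
    (W : EuclideanSpace ℝ (Fin k × Fin d)) :
    dipNetW n k d φ u V W = (1 / √k) • ∑ j, φ (rowMulVec u W j) • colVec V j := by
  ext i
  simp [dipNetW, rowMulVec_apply, colVec, mul_comm]

noncomputable def dipNetWJac (φ : ℝ → ℝ) (u : EuclideanSpace ℝ (Fin d))
    (V : Matrix (Fin n) (Fin k) ℝ) (W : EuclideanSpace ℝ (Fin k × Fin d)) :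
    EuclideanSpace ℝ (Fin k × Fin d) →L[ℝ] EuclideanSpace ℝ (Fin n) :=
  (1 / √k) • ∑ j, (deriv φ (rowMulVec u W j) •
    (EuclideanSpace.proj j ∘L rowMulVec u)).smulRight (colVec V j)

theorem hasFDerivAt_dipNetW {φ : ℝ → ℝ} (hφ : Differentiable ℝ φ) (u : EuclideanSpace ℝ (Fin d))
    (V : Matrix (Fin n) (Fin k) ℝ) (W : EuclideanSpace ℝ (Fin k × Fin d)) :
    HasFDerivAt (dipNetW n k d φ u V) (dipNetWJac φ u V W) W := by
  have hfun : dipNetW n k d φ u V =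
      fun W => (1 / √k) • ∑ j, φ (rowMulVec u W j) • colVec V j :=
    funext (dipNetW_eq_sum φ u V)
  rw [hfun]
  refine (HasFDerivAt.fun_sum fun j _ => ?_).const_smul (1 / √k)
  exact ((hφ _).hasDerivAt.comp_hasFDerivAt W
    (EuclideanSpace.proj j ∘L rowMulVec u).hasFDerivAt).smul_const (colVec V j)

theorem dipNetWJac_sub_apply (φ : ℝ → ℝ) (u : EuclideanSpace ℝ (Fin d))
    (V : Matrix (Fin n) (Fin k) ℝ) (W W' H : EuclideanSpace ℝ (Fin k × Fin d)) :
    (dipNetWJac φ u V W - dipNetWJac φ u V W') H = (1 / √k) •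
      ∑ j, ((deriv φ (rowMulVec u W j) - deriv φ (rowMulVec u W' j)) * rowMulVec u H j) •
        colVec V j := by
  simp only [dipNetWJac, sub_apply, smul_apply, sum_apply, ContinuousLinearMap.smulRight_apply,
    ContinuousLinearMap.comp_apply, PiLp.proj_apply, smul_eq_mul, ← smul_sub,
    ← Finset.sum_sub_distrib, ← sub_smul, ← sub_mul]

theorem norm_dipNetWJac_sub_le {φ : ℝ → ℝ} {B C : ℝ} (hB : 0 ≤ B) (hC : 0 ≤ C)
    (hφlip : ∀ x y, |deriv φ x - deriv φ y| ≤ B * |x - y|) (u : EuclideanSpace ℝ (Fin d))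
    {V : Matrix (Fin n) (Fin k) ℝ} (hV : ∀ j, ‖colVec V j‖ ≤ C)
    (W W' : EuclideanSpace ℝ (Fin k × Fin d)) :
    ‖dipNetWJac φ u V W - dipNetWJac φ u V W'‖ ≤ B * C * ‖u‖ ^ 2 / √k * ‖W - W'‖ := by
  refine ContinuousLinearMap.opNorm_le_bound _ (by positivity) fun H => ?_
  have hcoef : ∀ j, |(deriv φ (rowMulVec u W j) - deriv φ (rowMulVec u W' j)) * rowMulVec u H j|
      ≤ B * (|rowMulVec u (W - W') j| * |rowMulVec u H j|) := fun j => by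
    rw [abs_mul, map_sub, PiLp.sub_apply, ← mul_assoc]
    gcongr
    exact hφlip _ _
  calc ‖(dipNetWJac φ u V W - dipNetWJac φ u V W') H‖
      ≤ 1 / √k * (C * ∑ j, B * (|rowMulVec u (W - W') j| * |rowMulVec u H j|)) := by
        rw [dipNetWJac_sub_apply, norm_smul, Real.norm_of_nonneg (by positivity)]
        gcongr
        exact (norm_sum_smul_le_of_norm_le _ hV).trans (by gcongr with j; exact hcoef j)
    _ ≤ 1 / √k * (C * (B * (‖rowMulVec u (W - W')‖ * ‖rowMulVec u H‖))) := by
        rw [← Finset.mul_sum]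
        gcongr
        exact EuclideanSpace.sum_abs_mul_abs_le _ _
    _ ≤ 1 / √k * (C * (B * (‖W - W'‖ * ‖u‖ * (‖H‖ * ‖u‖)))) := by
        gcongr <;> exact norm_rowMulVec_le _ _
    _ = B * C * ‖u‖ ^ 2 / √k * ‖W - W'‖ * ‖H‖ := by ring

end DipNet

theorem stmt18_general (n k d : ℕ)
    (B D : ℝ) (hB : 0 < B) (hD : 0 < D)
    (φ : ℝ → ℝ) (hφ : ContDiff ℝ 1 φ)
    (hφlip : ∀ x y, |deriv φ x - deriv φ y| ≤ B * |x - y|)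
    (u : EuclideanSpace ℝ (Fin d)) (hu : ‖u‖ = 1)
    (V : Matrix (Fin n) (Fin k) ℝ)
    (hVcol : ∀ j : Fin k, Real.sqrt (∑ i : Fin n, V i j ^ 2) ≤ D * Real.sqrt n) :
    ∀ W W' : EuclideanSpace ℝ (Fin k × Fin d),
      ‖fderiv ℝ (dipNetW n k d φ u V) W - fderiv ℝ (dipNetW n k d φ u V) W'‖ ≤
        B * D * Real.sqrt ((n : ℝ) / k) * ‖W - W'‖ := by
  intro W W'
  have hφd : Differentiable ℝ φ := hφ.differentiable one_ne_zero
  rw [(hasFDerivAt_dipNetW hφd u V W).fderiv, (hasFDerivAt_dipNetW hφd u V W').fderiv]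
  have hcol : ∀ j, ‖colVec V j‖ ≤ D * √n := fun j => (norm_colVec V j).trans_le (hVcol j)
  convert norm_dipNetWJac_sub_le hB.le (by positivity) hφlip u hcol W W' using 2
  rw [hu, Real.sqrt_div (Nat.cast_nonneg n)]
  ring

theorem stmt18 (n k d : ℕ) (hk : 0 < k)
    (B D : ℝ) (hB : 0 < B) (hD : 0 < D)
    (φ : ℝ → ℝ) (hφ : ContDiff ℝ 1 φ)
    (hφB : ∀ x, |deriv φ x| ≤ B)
    (hφlip : ∀ x y, |deriv φ x - deriv φ y| ≤ B * |x - y|)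
    (u : EuclideanSpace ℝ (Fin d)) (hu : ‖u‖ = 1)
    (V : Matrix (Fin n) (Fin k) ℝ)
    (hVcol : ∀ j : Fin k, Real.sqrt (∑ i : Fin n, V i j ^ 2) ≤ D * Real.sqrt n) :
    ∀ W W' : EuclideanSpace ℝ (Fin k × Fin d),
      ‖fderiv ℝ (dipNetW n k d φ u V) W - fderiv ℝ (dipNetW n k d φ u V) W'‖ ≤
        B * D * Real.sqrt ((n : ℝ) / k) * ‖W - W'‖ :=
  stmt18_general n k d B D hB hD φ hφ hφlip u hu V hVcol
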